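/- arXiv:2210.00061 — 4 statements merged into one kernel-verified Lean document; each statement's English description precedes it below -/
import Mathlib

section
/- Let G be a finite group acting on a finite nonempty set Z and let k ≥ 1 be an integer. Then there exist an integer r ≥ 1 and finite-dimensional complex representations A and B of G such that χ_{π_k}(g)^r = k·(χ_A(g) − χ_B(g)) for all g ∈ G, where χ_{π_k} is the character of the permutation representation π_k. (This is part (1) of Proposition 2.1: [π_k]^r = k·α for some α in the representation ring R_ℂ(G).) -/
open Finset Nat Function


open Finset Nat Function
open scoped fwdDiff

private def fpow (m : ℕ) : ℕ → ℤ := fun x => (x : ℤ) ^ m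

private lemma fwdDiff_fpow (m : ℕ) :
    Δ_[1] (fpow m) = ∑ i ∈ range m, (m.choose i : ℤ) • fpow i := by
  funext x
  simp only [fwdDiff, fpow, Finset.sum_apply, Pi.smul_apply, smul_eq_mul]
  push_cast
  rw [add_pow]
  rw [Finset.sum_range_succ]
  simp [mul_comm]

private lemma fwdDiff_iter_fpow_eq_zero {m j : ℕ} (h : m < j) :
    (Δ_[1])^[j] (fpow m) = 0 := by
  induction m using Nat.strong_induction_on generalizing j with
  | _ m IH =>
    obtain ⟨j, rfl⟩ : ∃ j', j = j' + 1 := ⟨j - 1, by omega⟩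
    rw [Function.iterate_succ_apply, fwdDiff_fpow, fwdDiff_iter_finset_sum]
    refine Finset.sum_eq_zero fun i hi => ?_
    have hi' := Finset.mem_range.mp hi
    rw [fwdDiff_iter_const_smul, IH i hi' (by omega), smul_zero]

private lemma newton_trunc {t n m : ℕ} (hm : m ≤ n) :
    (t : ℤ) ^ m = ∑ j ∈ range (n + 1), (t.choose j : ℤ) * ((Δ_[1])^[j] (fpow m) 0) := by
  have h := shift_eq_sum_fwdDiff_iter 1 (fpow m) t 0
  simp only [zero_add, smul_eq_mul, mul_one, nsmul_eq_mul] at h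
  simp only [fpow] at h
  rw [h]
  set M := max t n with hM
  have e1 : ∑ j ∈ range (t + 1), (t.choose j : ℤ) * ((Δ_[1])^[j] (fpow m) 0)
      = ∑ j ∈ range (M + 1), (t.choose j : ℤ) * ((Δ_[1])^[j] (fpow m) 0) := by
    refine Finset.sum_subset (Finset.range_subset_range.mpr (by omega)) fun j _ hj => ?_
    have : t < j := by by_contra hcon; exact hj (Finset.mem_range.mpr (by omega))
    rw [Nat.choose_eq_zero_of_lt this]
    simp
  have e2 : ∑ j ∈ range (n + 1), (t.choose j : ℤ) * ((Δ_[1])^[j] (fpow m) 0)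
      = ∑ j ∈ range (M + 1), (t.choose j : ℤ) * ((Δ_[1])^[j] (fpow m) 0) := by
    refine Finset.sum_subset (Finset.range_subset_range.mpr (by omega)) fun j _ hj => ?_
    have hj' : n < j := by by_contra hcon; exact hj (Finset.mem_range.mpr (by omega))
    rw [fwdDiff_iter_fpow_eq_zero (by omega)]
    simp
  rw [e1, ← e2]

private lemma dvd_choose_pow (k n j : ℕ) (hj1 : 1 ≤ j) (hjn : j ≤ n) :
    k ∣ (k ^ (n + 1)).choose j := by
  rcases Nat.lt_or_ge k 2 with hk | hk
  · interval_cases k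
    · have : (0 : ℕ) ^ (n + 1) = 0 := by simp
      rw [this, Nat.choose_eq_zero_of_lt (by omega)]
    · exact one_dvd _
  · set t := k ^ (n + 1) with ht
    have hk0 : k ≠ 0 := by omega
    have hnt : n < t := lt_of_lt_of_le Nat.lt_two_pow_self
      (le_trans (Nat.pow_le_pow_right (by omega) (by omega)) (Nat.pow_le_pow_left hk _))
    have hjt : j ≤ t := by omega
    have ht0 : t ≠ 0 := by positivity
    have hC : t.choose j ≠ 0 := (Nat.choose_pos hjt).ne'
    have hC' : (t - 1).choose (j - 1) ≠ 0 := (Nat.choose_pos (by omega)).ne'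
    have key : t * (t - 1).choose (j - 1) = t.choose j * j := by
      have h := Nat.add_one_mul_choose_eq (t - 1) (j - 1)
      have e1 : t - 1 + 1 = t := by omega
      have e2 : j - 1 + 1 = j := by omega
      rw [e1, e2] at h
      exact h
    rw [← Nat.factorization_le_iff_dvd hk0 hC, Finsupp.le_def]
    intro p
    have h2 := congrArg Nat.factorization key
    rw [Nat.factorization_mul ht0 hC', Nat.factorization_mul hC (by omega)] at h2
    have h2p := DFunLike.congr_fun h2 p
    simp only [Finsupp.add_apply] at h2p
    have htp : t.factorization p = n * k.factorization p + k.factorization p := by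
      rw [ht, Nat.factorization_pow]
      simp; ring
    set v := k.factorization p with hv
    rcases Nat.eq_zero_or_pos v with hv0 | hv1
    · omega
    · have hjf : j.factorization p < j := Nat.factorization_lt p (by omega)
      have hnv : n ≤ n * v := Nat.le_mul_of_pos_right n hv1
      omega

private lemma key_identity (k n : ℕ) (hn : 1 ≤ n) :
    ∃ a : ℕ → ℤ, ∀ m : ℕ, 1 ≤ m → m ≤ n →
      (k : ℤ) ^ ((n + 1) * m) = (k : ℤ) * ∑ i ∈ range (n + 1), a i * (i : ℤ) ^ m := by
  rcases Nat.eq_zero_or_pos k with rfl | hk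
  · exact ⟨0, fun m hm _ => by simp [zero_pow (by positivity : (n+1)*m ≠ 0)]⟩
  set t := k ^ (n + 1) with ht
  have hdvd : ∀ j, 1 ≤ j → j ≤ n → (k : ℤ) ∣ (t.choose j : ℤ) := fun j h1 h2 =>
    Int.natCast_dvd_natCast.mpr (dvd_choose_pow k n j h1 h2)
  set c : ℕ → ℤ := fun j => if j = 0 then 0 else (t.choose j : ℤ) / k with hc
  set a : ℕ → ℤ := fun i => ∑ j ∈ range (n + 1), (-1 : ℤ) ^ (j - i) * (j.choose i : ℤ) * c j
    with ha
  refine ⟨a, fun m hm1 hm2 => ?_⟩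
  have inner : ∀ j ∈ range (n + 1),
      ∑ i ∈ range (n + 1), (-1 : ℤ) ^ (j - i) * (j.choose i : ℤ) * (i : ℤ) ^ m
        = (Δ_[1])^[j] (fpow m) 0 := by
    intro j hj
    have hjn : j ≤ n := by have := Finset.mem_range.mp hj; omega
    have h := fwdDiff_iter_eq_sum_shift 1 (fpow m) j 0
    simp only [zero_add, smul_eq_mul, mul_one, fpow] at h
    rw [h]
    refine (Finset.sum_subset (Finset.range_subset_range.mpr (by omega)) fun i _ hi => ?_).symm
    have : j < i := by by_contra hcon; exact hi (Finset.mem_range.mpr (by omega))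
    rw [Nat.choose_eq_zero_of_lt this]
    push_cast
    ring
  calc (k : ℤ) ^ ((n + 1) * m) = (t : ℤ) ^ m := by rw [ht]; push_cast [pow_mul]; ring
    _ = ∑ j ∈ range (n + 1), (t.choose j : ℤ) * ((Δ_[1])^[j] (fpow m) 0) := newton_trunc hm2
    _ = ∑ j ∈ range (n + 1), ((k : ℤ) * c j) * ((Δ_[1])^[j] (fpow m) 0) := by
        refine Finset.sum_congr rfl fun j hj => ?_
        rcases eq_or_ne j 0 with rfl | hj0
        · simp [hc, fpow, zero_pow (by omega : m ≠ 0)]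
        · have hjn : j ≤ n := by have := Finset.mem_range.mp hj; omega
          have : (k : ℤ) * c j = (t.choose j : ℤ) := by
            rw [hc]
            simp only [hj0, if_false]
            exact Int.mul_ediv_cancel' (hdvd j (by omega) hjn)
          rw [this]
    _ = ∑ j ∈ range (n + 1), ((k : ℤ) * c j) *
          ∑ i ∈ range (n + 1), (-1 : ℤ) ^ (j - i) * (j.choose i : ℤ) * (i : ℤ) ^ m := by
        refine Finset.sum_congr rfl fun j hj => ?_
        rw [inner j hj]
    _ = ∑ i ∈ range (n + 1), ∑ j ∈ range (n + 1),
          (k : ℤ) * ((-1 : ℤ) ^ (j - i) * (j.choose i : ℤ) * c j * (i : ℤ) ^ m) := by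
        rw [Finset.sum_comm]
        refine Finset.sum_congr rfl fun j _ => ?_
        rw [Finset.mul_sum]
        refine Finset.sum_congr rfl fun i _ => ?_
        ring
    _ = (k : ℤ) * ∑ i ∈ range (n + 1), a i * (i : ℤ) ^ m := by
        rw [Finset.mul_sum]
        refine Finset.sum_congr rfl fun i _ => ?_
        rw [ha]
        simp only [Finset.sum_mul, Finset.mul_sum]

/-- The shift action of `G` on functions `Z → α`, given by `(g • f) z = f (g⁻¹ • z)`. -/
instance shiftMulAction {G Z α : Type*} [Group G] [MulAction G Z] :
    MulAction G (Z → α) where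
  smul g f := fun z => f (g⁻¹ • z)
  one_smul f := by funext z; show f ((1 : G)⁻¹ • z) = f z; simp
  mul_smul g h f := by
    funext z
    show f ((g * h)⁻¹ • z) = f (h⁻¹ • g⁻¹ • z)
    rw [mul_inv_rev, mul_smul]

private lemma finsupp_fd (X : Type*) [Finite X] : FiniteDimensional ℂ (MonoidAlgebra ℂ X) := by
  cases nonempty_fintype X
  exact Module.Finite.equiv ((Finsupp.linearEquivFunOnFinite ℂ ℂ X).symm.trans
    (MonoidAlgebra.coeffLinearEquiv ℂ).symm)

private lemma trace_ofMulAction {G : Type*} [Group G] (X : Type*) [Finite X] [MulAction G X]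
    (g : G) :
    LinearMap.trace ℂ (MonoidAlgebra ℂ X) (Representation.ofMulAction ℂ G X g)
      = (Nat.card {x : X // g • x = x} : ℂ) := by
  classical
  cases nonempty_fintype X
  rw [LinearMap.trace_eq_matrix_trace ℂ (MonoidAlgebra.basis X ℂ)]
  have hdiag : ∀ x : X,
      (LinearMap.toMatrix (MonoidAlgebra.basis X ℂ) (MonoidAlgebra.basis X ℂ)
        (Representation.ofMulAction ℂ G X g)) x x = if g • x = x then (1 : ℂ) else 0 := by
    intro x
    rw [LinearMap.toMatrix_apply]
    simp only [MonoidAlgebra.basis_apply, Representation.ofMulAction_single]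
    simp [MonoidAlgebra.basis, Finsupp.single_apply]
  rw [Matrix.trace]
  simp only [Matrix.diag]
  rw [Finset.sum_congr rfl fun x _ => hdiag x]
  rw [Finset.sum_boole]
  rw [Nat.card_eq_fintype_card, Fintype.card_subtype]

private def fixedFunEquiv {G Z : Type*} [Group G] [MulAction G Z] (g : G) (α : Type*) :
    {f : Z → α // g • f = f} ≃
      (MulAction.orbitRel.Quotient (Subgroup.zpowers g) Z → α) := by
  set H := Subgroup.zpowers g with hH
  have key : ∀ (f : Z → α), g • f = f → ∀ h : H, ∀ z : Z, f ((h : G) • z) = f z := by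
    intro f hf h z
    have hle : H ≤ MulAction.stabilizer G f := by
      rw [hH, Subgroup.zpowers_le]
      exact hf
    have hinv : (h : G)⁻¹ ∈ MulAction.stabilizer G f := hle (Subgroup.inv_mem _ h.2)
    have : ((h : G)⁻¹ • f) z = f z := by rw [MulAction.mem_stabilizer_iff.mp hinv]
    calc f ((h : G) • z) = (((h : G)⁻¹) • f) z := by
          show f ((h:G) • z) = f (((h:G)⁻¹)⁻¹ • z)
          rw [inv_inv]
      _ = f z := this
  exact {
    toFun := fun f => Quotient.lift (fun z => f.1 z) (by
      intro z1 z2 hrel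
      obtain ⟨h, hh⟩ := hrel
      rw [← hh]
      exact key f.1 f.2 h z2)
    invFun := fun ψ => ⟨fun z => ψ (Quotient.mk _ z), by
      funext z
      show ψ (Quotient.mk _ (g⁻¹ • z)) = ψ (Quotient.mk _ z)
      refine congrArg ψ (Quotient.sound ?_)
      exact ⟨⟨g⁻¹, Subgroup.inv_mem _ (Subgroup.mem_zpowers g)⟩, rfl⟩⟩
    left_inv := fun f => Subtype.ext (funext fun z => rfl)
    right_inv := fun ψ => funext fun q => Quotient.inductionOn q fun z => rfl }

private lemma card_fixed_fun {G Z : Type*} [Group G] [MulAction G Z] [Finite Z] (g : G)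
    (b : ℕ) :
    Nat.card {f : Z → Fin b // g • f = f}
      = b ^ (Nat.card (MulAction.orbitRel.Quotient (Subgroup.zpowers g) Z)) := by
  rw [Nat.card_congr (fixedFunEquiv g (Fin b))]
  rw [Nat.card_fun]
  simp

private def PermSet (G Z : Type*) [Group G] [MulAction G Z] (N : ℕ) (mult : Fin N → ℕ) : Type _ :=
  Σ i : Fin N, Fin (mult i) × (Z → Fin (i : ℕ))

private instance permSetMulAction {G Z : Type*} [Group G] [MulAction G Z] (N : ℕ)
    (mult : Fin N → ℕ) : MulAction G (PermSet G Z N mult) where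
  smul g x := ⟨x.1, x.2.1, g • x.2.2⟩
  one_smul x := by
    obtain ⟨i, c, f⟩ := x
    show (⟨i, c, (1 : G) • f⟩ : PermSet G Z N mult) = ⟨i, c, f⟩
    rw [one_smul]
  mul_smul g h x := by
    show (⟨x.1, x.2.1, (g * h) • x.2.2⟩ : PermSet G Z N mult)
      = ⟨x.1, x.2.1, g • (h • x.2.2)⟩
    rw [mul_smul]

private instance permSetFinite {G Z : Type*} [Group G] [MulAction G Z] [Finite Z] (N : ℕ)
    (mult : Fin N → ℕ) : Finite (PermSet G Z N mult) := by
  unfold PermSet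
  infer_instance

private lemma permSet_fixed_iff {G Z : Type*} [Group G] [MulAction G Z] (N : ℕ)
    (mult : Fin N → ℕ) (g : G) (x : PermSet G Z N mult) :
    g • x = x ↔ g • x.2.2 = x.2.2 := by
  obtain ⟨i, c, f⟩ := x
  show (⟨i, c, g • f⟩ : PermSet G Z N mult) = ⟨i, c, f⟩ ↔ _
  constructor
  · intro h
    have h2 := (Sigma.mk.inj_iff.mp h).2
    have h3 : (c, g • f) = (c, f) := eq_of_heq h2
    exact (Prod.mk.injEq _ _ _ _).mp h3 |>.2
  · intro h
    rw [h]

private lemma card_fixed_permSet {G Z : Type*} [Group G] [MulAction G Z] [Finite Z] (N : ℕ)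
    (mult : Fin N → ℕ) (g : G) :
    Nat.card {x : PermSet G Z N mult // g • x = x}
      = ∑ i : Fin N, mult i *
          (i : ℕ) ^ (Nat.card (MulAction.orbitRel.Quotient (Subgroup.zpowers g) Z)) := by
  classical
  have e : {x : PermSet G Z N mult // g • x = x}
      ≃ Σ i : Fin N, Fin (mult i) × {f : Z → Fin (i : ℕ) // g • f = f} := by
    refine ⟨fun x => ⟨x.1.1, x.1.2.1, ⟨x.1.2.2, ((permSet_fixed_iff N mult g x.1).mp x.2)⟩⟩,
      fun p => ⟨⟨p.1, p.2.1, p.2.2.1⟩, (permSet_fixed_iff N mult g _).mpr p.2.2.2⟩,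
      fun x => ?_, fun p => ?_⟩
    · apply Subtype.ext
      obtain ⟨⟨i, c, f⟩, hx⟩ := x
      rfl
    · obtain ⟨i, c, f, hf⟩ := p
      rfl
  rw [Nat.card_congr e]
  cases nonempty_fintype Z
  have : ∀ i : Fin N, Fintype (Fin (mult i) × {f : Z → Fin (i : ℕ) // g • f = f}) := fun i =>
    Fintype.ofFinite _
  rw [Nat.card_eq_fintype_card, Fintype.card_sigma]
  refine Finset.sum_congr rfl fun i _ => ?_
  rw [← Nat.card_eq_fintype_card, Nat.card_prod, Nat.card_eq_fintype_card, Fintype.card_fin,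
    card_fixed_fun]

private lemma toNat_sub_neg_toNat (a : ℤ) : ((a.toNat : ℤ) - ((-a).toNat : ℤ)) = a := by omega

/-- Proposition 2.1(1). Let `G` be a finite group acting on a finite
nonempty set `Z` and `k ≥ 1`. There exist `r ≥ 1` and finite-dimensional complex
representations `A`, `B` of `G` such that `χ_{π_k}(g)^r = k • (χ_A(g) − χ_B(g))`
for all `g ∈ G`, where `π_k` is the permutation representation of `G` on the complex
vector space with basis `{1,…,k}^Z` (with the shift action). -/
theorem char_pow_eq_mul_virtual_character
    {G : Type} [Group G] [Finite G] {Z : Type} [Finite Z] [Nonempty Z] [MulAction G Z]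
    (k : ℕ) (hk : 1 ≤ k) :
    ∃ r : ℕ, 1 ≤ r ∧
      ∃ (A B : Type) (_ : AddCommGroup A) (_ : Module ℂ A) (_ : FiniteDimensional ℂ A)
        (_ : AddCommGroup B) (_ : Module ℂ B) (_ : FiniteDimensional ℂ B)
        (ρA : Representation ℂ G A) (ρB : Representation ℂ G B),
        ∀ g : G,
          (LinearMap.trace ℂ (MonoidAlgebra ℂ (Z → Fin k))
              ((Representation.ofMulAction ℂ G (Z → Fin k)) g)) ^ r =
            (k : ℂ) * (LinearMap.trace ℂ A (ρA g) - LinearMap.trace ℂ B (ρB g)) := by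
  set n := Nat.card Z with hn
  have hn1 : 1 ≤ n := Nat.card_pos
  obtain ⟨a, ha⟩ := key_identity k n hn1
  set multA : Fin (n + 1) → ℕ := fun i => (a i).toNat with hmA
  set multB : Fin (n + 1) → ℕ := fun i => (-(a i)).toNat with hmB
  refine ⟨n + 1, by omega, MonoidAlgebra ℂ (PermSet G Z (n + 1) multA), MonoidAlgebra ℂ (PermSet G Z (n + 1) multB),
    inferInstance, inferInstance, finsupp_fd _, inferInstance, inferInstance, finsupp_fd _,
    Representation.ofMulAction ℂ G _, Representation.ofMulAction ℂ G _, fun g => ?_⟩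
  set c := Nat.card (MulAction.orbitRel.Quotient (Subgroup.zpowers g) Z) with hc
  have hQne : Nonempty (MulAction.orbitRel.Quotient (Subgroup.zpowers g) Z) :=
    ⟨Quotient.mk _ (Classical.arbitrary Z)⟩
  have hc1 : 1 ≤ c := Nat.card_pos
  have hcn : c ≤ n := Nat.card_le_card_of_surjective (Quotient.mk _) Quotient.mk_surjective
  rw [trace_ofMulAction, trace_ofMulAction, trace_ofMulAction,
    card_fixed_fun g k, card_fixed_permSet, card_fixed_permSet]
  have hz := ha c hc1 hcn
  have hzc : (k : ℂ) ^ ((n + 1) * c)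
      = (k : ℂ) * ∑ i ∈ Finset.range (n + 1), (a i : ℂ) * (i : ℂ) ^ c := by
    have := congrArg (Int.cast : ℤ → ℂ) hz
    push_cast at this
    exact this
  push_cast
  calc ((k : ℂ) ^ c) ^ (n + 1) = (k : ℂ) ^ ((n + 1) * c) := by
        rw [← pow_mul, mul_comm]
    _ = (k : ℂ) * ∑ i ∈ Finset.range (n + 1), (a i : ℂ) * (i : ℂ) ^ c := hzc
    _ = (k : ℂ) * ∑ i : Fin (n + 1), (a (i : ℕ) : ℂ) * ((i : ℕ) : ℂ) ^ c := by
        rw [Fin.sum_univ_eq_sum_range (fun i => (a i : ℂ) * (i : ℂ) ^ c)]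
    _ = (k : ℂ) * ((∑ i : Fin (n + 1), (multA i : ℂ) * ((i : ℕ) : ℂ) ^ c)
          - ∑ i : Fin (n + 1), (multB i : ℂ) * ((i : ℕ) : ℂ) ^ c) := by
        rw [← Finset.sum_sub_distrib]
        congr 1
        refine Finset.sum_congr rfl fun i _ => ?_
        rw [← sub_mul]
        congr 1
        have := congrArg (Int.cast : ℤ → ℂ) (toNat_sub_neg_toNat (a (i : ℕ)))
        push_cast at this
        rw [← this]
end

section
/- Let S and T be sets of prime numbers. Then there is an isomorphism of abelian groups ℚ_S ⊗_ℤ (ℚ_T/ℤ) ≅ ℚ_{S∪T}/ℚ_S, where ℚ_S is viewed as a subgroup of ℚ_{S∪T}. (For supernatural numbers 𝔪, 𝔫 of infinite type this is the isomorphism ℚ_𝔫 ⊗_ℤ (ℚ_𝔪/ℤ) ≅ ℚ_{𝔪𝔫}/ℚ_𝔫 used in Corollary 3.3.) -/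
/-- `ℚ_S`: the additive subgroup of `ℚ` of rationals whose (reduced) denominator has all
of its prime factors in `S`; equivalently, rationals that can be written as a fraction
whose denominator has all of its prime factors in `S`. -/
def ratSubgroup (S : Set ℕ) : AddSubgroup ℚ where
  carrier := {q : ℚ | ∀ p : ℕ, p.Prime → p ∣ q.den → p ∈ S}
  zero_mem' := by
    intro p hp hd
    rw [Rat.den_zero] at hd
    exact absurd (Nat.dvd_one.mp hd) hp.ne_one
  add_mem' := by
    intro a b ha hb p hp hd
    rcases (Nat.Prime.dvd_mul hp).mp (hd.trans (Rat.add_den_dvd a b)) with h | h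
    · exact ha p hp h
    · exact hb p hp h
  neg_mem' := by
    intro a ha p hp hd
    rw [Rat.neg_den] at hd
    exact ha p hp hd

namespace RatSubgroupAux

lemma int_div_mem {T : Set ℕ} {t : ℕ} (hT : ∀ p, p.Prime → p ∣ t → p ∈ T) (a : ℤ) :
    ((a : ℚ) / (t : ℚ)) ∈ ratSubgroup T := by
  intro p hp hd
  apply hT p hp
  have h1 : (((Rat.divInt a (t : ℤ))).den : ℤ) ∣ (t : ℤ) := Rat.den_dvd a (t : ℤ)
  rw [Rat.divInt_eq_div] at h1
  push_cast at h1
  exact hd.trans (Int.ofNat_dvd.mp (by exact_mod_cast h1))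

lemma one_div_mem {S : Set ℕ} {s : ℕ} (hsS : ∀ p, p.Prime → p ∣ s → p ∈ S) :
    (1 / (s : ℚ)) ∈ ratSubgroup S := by
  have := int_div_mem hsS 1
  simpa using this

lemma mul_mem_union {S T : Set ℕ} {a b : ℚ} (ha : a ∈ ratSubgroup S) (hb : b ∈ ratSubgroup T) :
    a * b ∈ ratSubgroup (S ∪ T) := by
  intro p hp hd
  rcases (Nat.Prime.dvd_mul hp).mp (hd.trans (Rat.mul_den_dvd a b)) with h | h
  · exact Or.inl (ha p hp h)
  · exact Or.inr (hb p hp h)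

/-- Factor an `S ∪ T`-number as a product of an `S`-number and a `T`-number. -/
lemma factor_exists (S T : Set ℕ) : ∀ d : ℕ, d ≠ 0 → (∀ p, p.Prime → p ∣ d → p ∈ S ∪ T) →
    ∃ s t : ℕ, s ≠ 0 ∧ t ≠ 0 ∧ (∀ p, p.Prime → p ∣ s → p ∈ S) ∧
      (∀ p, p.Prime → p ∣ t → p ∈ T) ∧ d = s * t := by
  intro d
  induction d using Nat.strong_induction_on with
  | _ d ih =>
    intro hd hdST
    rcases eq_or_ne d 1 with rfl | hd1
    · exact ⟨1, 1, one_ne_zero, one_ne_zero,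
        fun p hp hdvd => absurd (Nat.dvd_one.mp hdvd) hp.ne_one,
        fun p hp hdvd => absurd (Nat.dvd_one.mp hdvd) hp.ne_one, rfl⟩
    · have hp : d.minFac.Prime := Nat.minFac_prime hd1
      have hpd : d.minFac ∣ d := Nat.minFac_dvd d
      set r := d.minFac with hr
      obtain ⟨d', hd'eq⟩ := hpd
      have hd' : d' ≠ 0 := by
        rintro rfl
        rw [Nat.mul_zero] at hd'eq
        exact hd hd'eq
      have hlt : d' < d := by
        rw [hd'eq]
        calc d' = 1 * d' := (one_mul d').symm
        _ < r * d' := (Nat.mul_lt_mul_right (Nat.pos_of_ne_zero hd')).mpr hp.one_lt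
      obtain ⟨s, t, hs, ht, hsS, htT, hstd⟩ := ih d' hlt hd'
        (fun q hq hqd => hdST q hq (hd'eq ▸ hqd.mul_left r))
      rcases hdST r hp (hr ▸ Nat.minFac_dvd d) with hpS | hpT
      · refine ⟨r * s, t, mul_ne_zero hp.pos.ne' hs, ht, ?_, htT, by
          rw [hd'eq, hstd]; ring⟩
        intro q hq hqd
        rcases (Nat.Prime.dvd_mul hq).mp hqd with h | h
        · rwa [(Nat.prime_dvd_prime_iff_eq hq hp).mp h]
        · exact hsS q hq h
      · refine ⟨s, r * t, hs, mul_ne_zero hp.pos.ne' ht, hsS, ?_, by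
          rw [hd'eq, hstd]; ring⟩
        intro q hq hqd
        rcases (Nat.Prime.dvd_mul hq).mp hqd with h | h
        · rwa [(Nat.prime_dvd_prime_iff_eq hq hp).mp h]
        · exact htT q hq h

/-- Every element of `ℚ_S ⊗ M` is a simple tensor `(1/s) ⊗ m`. -/
lemma rep (S : Set ℕ) {M : Type} [AddCommGroup M]
    (z : TensorProduct ℤ (ratSubgroup S) M) :
    ∃ (s : ℕ) (_ : s ≠ 0) (hsS : ∀ p, p.Prime → p ∣ s → p ∈ S) (m : M),
      z = (⟨1 / (s : ℚ), one_div_mem hsS⟩ : ratSubgroup S) ⊗ₜ[ℤ] m := by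
  induction z using TensorProduct.induction_on with
  | zero =>
    exact ⟨1, one_ne_zero, fun p hp hdvd => absurd (Nat.dvd_one.mp hdvd) hp.ne_one, 0,
      (TensorProduct.tmul_zero _ _).symm⟩
  | tmul a m =>
    refine ⟨(a : ℚ).den, (a : ℚ).den_nz, a.2, (a : ℚ).num • m, ?_⟩
    have ha : a = (a : ℚ).num • (⟨1 / ((a : ℚ).den : ℚ), one_div_mem a.2⟩ : ratSubgroup S) := by
      ext
      push_cast
      rw [zsmul_eq_mul, mul_one_div, Rat.num_div_den]
    conv_lhs => rw [ha]
    rw [TensorProduct.smul_tmul]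
  | add x y hx hy =>
    obtain ⟨s, hs, hsS, m, rfl⟩ := hx
    obtain ⟨s', hs', hsS', m', rfl⟩ := hy
    have hss' : ∀ p, p.Prime → p ∣ s * s' → p ∈ S := by
      intro p hp hd
      rcases (Nat.Prime.dvd_mul hp).mp hd with h | h
      · exact hsS p hp h
      · exact hsS' p hp h
    refine ⟨s * s', mul_ne_zero hs hs', hss', (s' : ℤ) • m + (s : ℤ) • m', ?_⟩
    have hsq : (s : ℚ) ≠ 0 := Nat.cast_ne_zero.mpr hs
    have hsq' : (s' : ℚ) ≠ 0 := Nat.cast_ne_zero.mpr hs'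
    rw [TensorProduct.tmul_add]
    congr 1
    · rw [← TensorProduct.smul_tmul]
      congr 1
      ext
      push_cast
      rw [zsmul_eq_mul]
      field_simp
      norm_cast
    · rw [← TensorProduct.smul_tmul]
      congr 1
      ext
      push_cast
      rw [zsmul_eq_mul]
      field_simp
      try ring
      norm_cast

variable (S T : Set ℕ)

/-- Multiplication by `a ∈ ℚ_S` as a map `ℚ_T →+ ℚ_{S∪T}/ℚ_S`. -/
def mulHom1 (a : ratSubgroup S) :
    ratSubgroup T →+
      (ratSubgroup (S ∪ T) ⧸ ((ratSubgroup S).addSubgroupOf (ratSubgroup (S ∪ T)))) where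
  toFun b := QuotientAddGroup.mk' _ ⟨(a : ℚ) * (b : ℚ), mul_mem_union a.2 b.2⟩
  map_zero' := by
    have h : (⟨(a : ℚ) * ((0 : ratSubgroup T) : ℚ),
        mul_mem_union a.2 (0 : ratSubgroup T).2⟩ : ratSubgroup (S ∪ T)) = 0 := by
      apply Subtype.ext
      simp
    exact (congrArg (QuotientAddGroup.mk'
      ((ratSubgroup S).addSubgroupOf (ratSubgroup (S ∪ T)))) h).trans (map_zero _)
  map_add' b b' := by
    have h : (⟨(a : ℚ) * ((b + b' : ratSubgroup T) : ℚ),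
        mul_mem_union a.2 (b + b').2⟩ : ratSubgroup (S ∪ T)) =
        ⟨(a : ℚ) * (b : ℚ), mul_mem_union a.2 b.2⟩ +
          ⟨(a : ℚ) * (b' : ℚ), mul_mem_union a.2 b'.2⟩ := by
      apply Subtype.ext
      push_cast
      ring
    exact (congrArg (QuotientAddGroup.mk'
      ((ratSubgroup S).addSubgroupOf (ratSubgroup (S ∪ T)))) h).trans (map_add _ _ _)

lemma mulHom1_int (a : ratSubgroup S) (b : ratSubgroup T)
    (hb : b ∈ (Int.castAddHom ℚ).range.addSubgroupOf (ratSubgroup T)) :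
    mulHom1 S T a b = 0 := by
  obtain ⟨n, hn⟩ := (AddSubgroup.mem_addSubgroupOf).mp hb
  simp only [Int.coe_castAddHom] at hn
  show QuotientAddGroup.mk' ((ratSubgroup S).addSubgroupOf (ratSubgroup (S ∪ T)))
    ⟨(a : ℚ) * (b : ℚ), mul_mem_union a.2 b.2⟩ = 0
  rw [QuotientAddGroup.mk'_apply, QuotientAddGroup.eq_zero_iff,
    AddSubgroup.mem_addSubgroupOf]
  show (a : ℚ) * (b : ℚ) ∈ ratSubgroup S
  rw [← hn, mul_comm, ← zsmul_eq_mul]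
  exact AddSubgroup.zsmul_mem _ a.2 n

def mulHom2 (a : ratSubgroup S) :
    (ratSubgroup T ⧸ ((Int.castAddHom ℚ).range.addSubgroupOf (ratSubgroup T))) →+
      (ratSubgroup (S ∪ T) ⧸ ((ratSubgroup S).addSubgroupOf (ratSubgroup (S ∪ T)))) :=
  QuotientAddGroup.lift _ (mulHom1 S T a) (mulHom1_int S T a)

@[simp] lemma mulHom2_mk (a : ratSubgroup S) (b : ratSubgroup T) :
    mulHom2 S T a (QuotientAddGroup.mk b) =
      QuotientAddGroup.mk' _ ⟨(a : ℚ) * (b : ℚ), mul_mem_union a.2 b.2⟩ :=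
  rfl

def mulHom3 : ratSubgroup S →+
    ((ratSubgroup T ⧸ ((Int.castAddHom ℚ).range.addSubgroupOf (ratSubgroup T))) →+
      (ratSubgroup (S ∪ T) ⧸ ((ratSubgroup S).addSubgroupOf (ratSubgroup (S ∪ T))))) where
  toFun := mulHom2 S T
  map_zero' := by
    refine AddMonoidHom.ext fun m => ?_
    obtain ⟨b, rfl⟩ := QuotientAddGroup.mk_surjective m
    rw [mulHom2_mk]
    simp only [AddMonoidHom.zero_apply]
    have h : (⟨((0 : ratSubgroup S) : ℚ) * (b : ℚ),
        mul_mem_union (0 : ratSubgroup S).2 b.2⟩ : ratSubgroup (S ∪ T)) = 0 := by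
      apply Subtype.ext
      simp
    exact (congrArg (QuotientAddGroup.mk'
      ((ratSubgroup S).addSubgroupOf (ratSubgroup (S ∪ T)))) h).trans (map_zero _)
  map_add' a a' := by
    refine AddMonoidHom.ext fun m => ?_
    obtain ⟨b, rfl⟩ := QuotientAddGroup.mk_surjective m
    simp only [AddMonoidHom.add_apply, mulHom2_mk]
    have h : (⟨((a + a' : ratSubgroup S) : ℚ) * (b : ℚ),
        mul_mem_union (a + a').2 b.2⟩ : ratSubgroup (S ∪ T)) =
        ⟨(a : ℚ) * (b : ℚ), mul_mem_union a.2 b.2⟩ +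
          ⟨(a' : ℚ) * (b : ℚ), mul_mem_union a'.2 b.2⟩ := by
      apply Subtype.ext
      push_cast
      ring
    exact (congrArg (QuotientAddGroup.mk'
      ((ratSubgroup S).addSubgroupOf (ratSubgroup (S ∪ T)))) h).trans (map_add _ _ _)

noncomputable def phi :
    TensorProduct ℤ (ratSubgroup S)
      (ratSubgroup T ⧸ ((Int.castAddHom ℚ).range.addSubgroupOf (ratSubgroup T))) →+
    (ratSubgroup (S ∪ T) ⧸ ((ratSubgroup S).addSubgroupOf (ratSubgroup (S ∪ T)))) :=
  TensorProduct.liftAddHom (mulHom3 S T) (by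
    intro r a m
    obtain ⟨b, rfl⟩ := QuotientAddGroup.mk_surjective m
    show mulHom2 S T (r • a) (QuotientAddGroup.mk b) =
      mulHom2 S T a (QuotientAddGroup.mk (r • b))
    rw [mulHom2_mk, mulHom2_mk]
    refine congrArg (QuotientAddGroup.mk'
      ((ratSubgroup S).addSubgroupOf (ratSubgroup (S ∪ T)))) (Subtype.ext ?_)
    push_cast
    rw [zsmul_eq_mul, zsmul_eq_mul]
    ring)

@[simp] lemma phi_tmul (a : ratSubgroup S) (b : ratSubgroup T) :
    phi S T (a ⊗ₜ[ℤ] (QuotientAddGroup.mk b)) =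
      QuotientAddGroup.mk' _ ⟨(a : ℚ) * (b : ℚ), mul_mem_union a.2 b.2⟩ := by
  rw [phi, TensorProduct.liftAddHom_tmul]
  rfl

lemma phi_surjective : Function.Surjective (phi S T) := by
  intro q
  induction q using QuotientAddGroup.induction_on with
  | H c =>
    obtain ⟨s, t, hs, ht, hsS, htT, hst⟩ :=
      factor_exists S T (c : ℚ).den (c : ℚ).den_nz c.2
    refine ⟨(⟨1 / (s : ℚ), one_div_mem hsS⟩ : ratSubgroup S) ⊗ₜ[ℤ]
      (QuotientAddGroup.mk (⟨((c : ℚ).num : ℚ) / (t : ℚ), int_div_mem htT _⟩ :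
        ratSubgroup T)), ?_⟩
    rw [phi_tmul]
    have hval : (1 / (s : ℚ)) * (((c : ℚ).num : ℚ) / (t : ℚ)) = (c : ℚ) := by
      rw [div_mul_div_comm, one_mul, ← Nat.cast_mul, ← hst, Rat.num_div_den]
    exact congrArg (QuotientAddGroup.mk'
      ((ratSubgroup S).addSubgroupOf (ratSubgroup (S ∪ T)))) (Subtype.ext hval)

lemma phi_injective : Function.Injective (phi S T) := by
  rw [injective_iff_map_eq_zero]
  intro z hz
  obtain ⟨s, hs, hsS, m, rfl⟩ := rep S z
  obtain ⟨b, rfl⟩ := QuotientAddGroup.mk_surjective m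
  rw [phi_tmul, QuotientAddGroup.mk'_apply, QuotientAddGroup.eq_zero_iff,
    AddSubgroup.mem_addSubgroupOf] at hz
  have hz' : (1 / (s : ℚ)) * (b : ℚ) ∈ ratSubgroup S := hz
  have hsq : (s : ℚ) ≠ 0 := Nat.cast_ne_zero.mpr hs
  -- all primes of `b.den` are in `S`
  have hbden : ∀ p, p.Prime → p ∣ (b : ℚ).den → p ∈ S := by
    intro p hp hd
    have hb : (b : ℚ) = (s : ℚ) * ((1 / (s : ℚ)) * (b : ℚ)) := by
      field_simp
    have hdvd : (b : ℚ).den ∣ ((1 / (s : ℚ)) * (b : ℚ)).den := by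
      have := Rat.mul_den_dvd ((s : ℕ) : ℚ) ((1 / (s : ℚ)) * (b : ℚ))
      rw [← hb, Rat.den_natCast, one_mul] at this
      exact this
    exact hz' p hp (hd.trans hdvd)
  set u := (b : ℚ).den with hu
  have hu0 : u ≠ 0 := (b : ℚ).den_nz
  have huq : (u : ℚ) ≠ 0 := Nat.cast_ne_zero.mpr hu0
  have hsu : ∀ p, p.Prime → p ∣ s * u → p ∈ S := by
    intro p hp hd
    rcases (Nat.Prime.dvd_mul hp).mp hd with h | h
    · exact hsS p hp h
    · exact hbden p hp h
  have ha : (⟨1 / (s : ℚ), one_div_mem hsS⟩ : ratSubgroup S) =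
      (u : ℤ) • (⟨1 / ((s * u : ℕ) : ℚ), one_div_mem hsu⟩ : ratSubgroup S) := by
    ext
    push_cast
    rw [zsmul_eq_mul]
    field_simp
    norm_cast
  rw [ha, TensorProduct.smul_tmul]
  have hbu : (b : ℚ) * (u : ℚ) = ((b : ℚ).num : ℚ) := by
    rw [eq_comm, mul_comm, hu, mul_comm]
    exact (div_eq_iff (by rw [hu] at huq; exact huq)).mp (Rat.num_div_den (b : ℚ)) |>.symm ▸ rfl
  have hub : (u : ℤ) • (QuotientAddGroup.mk b :
      ratSubgroup T ⧸ ((Int.castAddHom ℚ).range.addSubgroupOf (ratSubgroup T))) = 0 := by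
    rw [← QuotientAddGroup.mk'_apply, ← map_zsmul, QuotientAddGroup.mk'_apply,
      QuotientAddGroup.eq_zero_iff, AddSubgroup.mem_addSubgroupOf]
    refine ⟨(b : ℚ).num, ?_⟩
    show (((b : ℚ).num : ℤ) : ℚ) = (((u : ℤ) • b : ratSubgroup T) : ℚ)
    push_cast
    rw [zsmul_eq_mul, ← hbu]
    push_cast
    ring
  rw [hub, TensorProduct.tmul_zero]

end RatSubgroupAux

/-- For sets `S`, `T` of primes, there is an isomorphism of abelian
groups `ℚ_S ⊗_ℤ (ℚ_T/ℤ) ≅ ℚ_{S∪T}/ℚ_S`, where `ℚ_S` is viewed as a subgroup of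
`ℚ_{S∪T}` and `ℤ` as a subgroup of `ℚ_T`. -/
theorem ratSubgroup_tensor_quotient_addEquiv
    (S T : Set ℕ) (hS : ∀ p ∈ S, Nat.Prime p) (hT : ∀ p ∈ T, Nat.Prime p) :
    Nonempty
      ((TensorProduct ℤ (ratSubgroup S)
          (ratSubgroup T ⧸ ((Int.castAddHom ℚ).range.addSubgroupOf (ratSubgroup T)))) ≃+
        (ratSubgroup (S ∪ T) ⧸ ((ratSubgroup S).addSubgroupOf (ratSubgroup (S ∪ T))))) := by
  exact ⟨AddEquiv.ofBijective (RatSubgroupAux.phi S T)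
    ⟨RatSubgroupAux.phi_injective S T, RatSubgroupAux.phi_surjective S T⟩⟩
end

section
/- Let M be an abelian group and let (p_i)_{i≥1} be a sequence of prime numbers in which every prime number occurs infinitely often. Then the colimit of the direct system M → M → M → ⋯, where the i-th connecting map is multiplication by p_i, is isomorphic as an abelian group to M ⊗_ℤ ℚ. -/
/-- The direct system `M → M → M → ⋯` whose `i`-th connecting map is multiplication by
`p i`; the transition map from stage `i` to stage `j` is multiplication by
`∏_{i ≤ l < j} p l`. -/
def mulDirectSystem (M : Type*) [AddCommGroup M] (p : ℕ → ℕ) :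
    ∀ i j : ℕ, i ≤ j → (M →ₗ[ℤ] M) :=
  fun i j _ => (∏ l ∈ Finset.Ico i j, (p l : ℤ)) • LinearMap.id

lemma mulDirectSystem_apply (M : Type*) [AddCommGroup M] (p : ℕ → ℕ)
    (i j : ℕ) (h : i ≤ j) (x : M) :
    mulDirectSystem M p i j h x = (∏ l ∈ Finset.Ico i j, (p l : ℤ)) • x := rfl

instance mulDirectSystem_directed (M : Type*) [AddCommGroup M] (p : ℕ → ℕ) :
    DirectedSystem (fun _ : ℕ => M) (fun i j h => mulDirectSystem M p i j h) where
  map_self i x := by simp [mulDirectSystem_apply]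
  map_map {k j i} hij hjk x := by
    simp only [mulDirectSystem_apply, smul_smul]
    rw [mul_comm, Finset.prod_Ico_consecutive _ hij hjk]

/-- Every positive natural number divides some product of consecutive `p l`'s starting at any
given index, provided every prime occurs infinitely often in `p`. -/
lemma exists_dvd_prod_Ico (p : ℕ → ℕ) (hp : ∀ i, (p i).Prime)
    (hall : ∀ q : ℕ, q.Prime → {i : ℕ | p i = q}.Infinite) :
    ∀ n : ℕ, 0 < n → ∀ i₀ : ℕ, ∃ j : ℕ, i₀ ≤ j ∧ n ∣ ∏ l ∈ Finset.Ico i₀ j, p l := by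
  intro n
  induction n using Nat.strong_induction_on with
  | _ n IH =>
    intro hn i₀
    rcases eq_or_lt_of_le (Nat.one_le_iff_ne_zero.mpr hn.ne') with h1 | h2
    · exact ⟨i₀, le_rfl, by simp [← h1]⟩
    · -- n ≥ 2
      have hq : n.minFac.Prime := Nat.minFac_prime (by omega)
      obtain ⟨k, hkmem, hki₀⟩ := (hall n.minFac hq).exists_gt i₀
      have hdiv : n / n.minFac < n := Nat.div_lt_self hn hq.one_lt
      have hpos : 0 < n / n.minFac :=
        Nat.div_pos (Nat.minFac_le hn) hq.pos
      obtain ⟨j, hj, hdvd⟩ := IH _ hdiv hpos (k + 1)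
      refine ⟨j, by omega, ?_⟩
      have hsplit : ∏ l ∈ Finset.Ico i₀ j, p l =
          (∏ l ∈ Finset.Ico i₀ k, p l) * ∏ l ∈ Finset.Ico k j, p l :=
        (Finset.prod_Ico_consecutive _ (le_of_lt hki₀) (by omega)).symm
      have hsplit2 : ∏ l ∈ Finset.Ico k j, p l = p k * ∏ l ∈ Finset.Ico (k + 1) j, p l :=
        Finset.prod_eq_prod_Ico_succ_bot (by omega) _
      have : n ∣ ∏ l ∈ Finset.Ico k j, p l := by
        rw [hsplit2, hkmem]
        simpa [Nat.mul_div_cancel' n.minFac_dvd] using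
          mul_dvd_mul (dvd_refl n.minFac) hdvd
      rw [hsplit]
      exact this.mul_left _

/-- Let `M` be an abelian group and `(p_i)` a sequence of primes in
which every prime occurs infinitely often. Then the colimit of the direct system
`M → M → M → ⋯`, with `i`-th connecting map multiplication by `p_i`, is isomorphic as
an abelian group to `M ⊗_ℤ ℚ`. -/
theorem directLimit_mul_primes_addEquiv_tensor_rat
    (M : Type) [AddCommGroup M] (p : ℕ → ℕ) (hp : ∀ i, (p i).Prime)
    (hall : ∀ q : ℕ, q.Prime → {i : ℕ | p i = q}.Infinite) :
    Nonempty
      ((Module.DirectLimit (fun _ : ℕ => M) (mulDirectSystem M p)) ≃+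
        TensorProduct ℤ M ℚ) := by
  classical
  set T := TensorProduct ℤ M ℚ
  set S := nonZeroDivisors ℤ
  -- the natural map `M → M ⊗ ℚ` is the localization of `M` at the nonzero integers
  let f : M →ₗ[ℤ] T :=
    (TensorProduct.comm ℤ ℚ M).toLinearMap ∘ₗ TensorProduct.mk ℤ ℚ M 1
  haveI hbc : IsLocalizedModule S (TensorProduct.mk ℤ ℚ M 1) :=
    (isLocalizedModule_iff_isBaseChange S ℚ _).mpr (TensorProduct.isBaseChange ℤ M ℚ)
  haveI hloc : IsLocalizedModule S f := IsLocalizedModule.of_linearEquiv S _ _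
  -- the products of primes, as elements of the submonoid `S`
  have hprodpos : ∀ i j : ℕ, (0 : ℤ) < ∏ l ∈ Finset.Ico i j, (p l : ℤ) := by
    intro i j
    refine Finset.prod_pos fun l _ => ?_
    exact_mod_cast (hp l).pos
  let P : ℕ → S := fun i =>
    ⟨∏ l ∈ Finset.Ico 0 i, (p l : ℤ), mem_nonZeroDivisors_of_ne_zero (hprodpos 0 i).ne'⟩
  -- the map at stage `i`: `m ↦ m ⊗ (1 / P i)`, defined via inverting the action of `P i`
  have hunit : ∀ i : ℕ, IsUnit (algebraMap ℤ (Module.End ℤ T) (P i : ℤ)) := fun i =>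
    IsLocalizedModule.map_units f (P i)
  let g : ∀ _ : ℕ, M →ₗ[ℤ] T := fun i => (↑(hunit i).unit⁻¹ : Module.End ℤ T) ∘ₗ f
  have hPg : ∀ (i : ℕ) (m : M), (P i : ℤ) • g i m = f m := by
    intro i m
    have := (hunit i).unit.mul_inv
    calc (P i : ℤ) • g i m
        = (algebraMap ℤ (Module.End ℤ T) (P i : ℤ)) (g i m) := by
          simp [Module.algebraMap_end_apply]
      _ = ((hunit i).unit * (hunit i).unit⁻¹ : Module.End ℤ T) (f m) := rfl
      _ = f m := by rw [this]; rfl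
  have hsmul_inj : ∀ (s : S), Function.Injective fun x : T => (s : ℤ) • x := by
    intro s
    have := IsLocalizedModule.smul_injective f s
    simpa [Submonoid.smul_def] using this
  -- compatibility with the transition maps
  have hcompat : ∀ (i j : ℕ) (hij : i ≤ j) (x : M),
      g j (mulDirectSystem M p i j hij x) = g i x := by
    intro i j hij x
    apply hsmul_inj (P j)
    show ((P j : ℤ)) • g j (mulDirectSystem M p i j hij x) = ((P j : ℤ)) • g i x
    rw [hPg j]
    have hPij : (P j : ℤ) = (P i : ℤ) * ∏ l ∈ Finset.Ico i j, (p l : ℤ) := by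
      simp only [P]
      exact (Finset.prod_Ico_consecutive _ (Nat.zero_le i) hij).symm
    rw [mulDirectSystem_apply, map_smul, hPij, mul_smul, smul_comm ((P i : ℤ)), hPg i]
  -- the induced map from the direct limit
  let φ : Module.DirectLimit (fun _ : ℕ => M) (mulDirectSystem M p) →ₗ[ℤ] T :=
    Module.DirectLimit.lift ℤ ℕ (fun _ : ℕ => M) (mulDirectSystem M p) g hcompat
  have hinj : Function.Injective φ := by
    rw [injective_iff_map_eq_zero]
    intro z hz
    obtain ⟨i, m, rfl⟩ := Module.DirectLimit.exists_of z
    replace hz : g i m = 0 := (Module.DirectLimit.lift_of (G := fun _ : ℕ => M) (f := mulDirectSystem M p) g hcompat m).symm.trans hz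
    -- `f m = 0` in the localization, hence `m` is torsion
    have hfm : f m = 0 := by
      rw [← hPg i, hz, smul_zero]
    obtain ⟨s, hs⟩ := (IsLocalizedModule.eq_zero_iff S f).mp hfm
    have hsne : (s : ℤ) ≠ 0 := nonZeroDivisors.coe_ne_zero s
    have hs' : (s : ℤ) • m = 0 := hs
    have hnat : ((s : ℤ).natAbs : ℤ) • m = 0 := by
      rcases Int.natAbs_eq (s : ℤ) with h | h
      · rw [← h]; exact hs'
      · have habs : ((s : ℤ).natAbs : ℤ) = -(s : ℤ) := by omega
        rw [habs, neg_smul, hs', neg_zero]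
    obtain ⟨j, hij, hdvd⟩ := exists_dvd_prod_Ico p hp hall (s : ℤ).natAbs
      (Int.natAbs_pos.mpr hsne) i
    obtain ⟨c, hc⟩ := hdvd
    have : mulDirectSystem M p i j hij m = 0 := by
      rw [mulDirectSystem_apply]
      have key : (∏ l ∈ Finset.Ico i j, (p l : ℤ)) = (c : ℤ) * ((s : ℤ).natAbs : ℤ) := by
        rw [show (∏ l ∈ Finset.Ico i j, (p l : ℤ))
              = ((∏ l ∈ Finset.Ico i j, p l : ℕ) : ℤ) by push_cast; rfl, hc]
        push_cast; ring
      rw [key, mul_smul, hnat, smul_zero]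
    rw [← Module.DirectLimit.of_f (hij := hij), this, map_zero]
  have hsurj : Function.Surjective φ := by
    intro y
    obtain ⟨⟨m, s⟩, hms⟩ := IsLocalizedModule.surj S f y
    obtain ⟨i, _, hdvd⟩ := exists_dvd_prod_Ico p hp hall (s : ℤ).natAbs
      (Int.natAbs_pos.mpr (nonZeroDivisors.coe_ne_zero s)) 0
    have hdvd' : (s : ℤ) ∣ (P i : ℤ) := by
      apply Int.natAbs_dvd.mp
      have hcast : (P i : ℤ) = ((∏ l ∈ Finset.Ico 0 i, p l : ℕ) : ℤ) := by
        simp [P]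
      rw [hcast]
      exact_mod_cast Int.natCast_dvd_natCast.mpr hdvd
    obtain ⟨c, hc⟩ := hdvd'
    refine ⟨Module.DirectLimit.of ℤ ℕ (fun _ : ℕ => M) (mulDirectSystem M p) i (c • m), ?_⟩
    refine (Module.DirectLimit.lift_of (G := fun _ : ℕ => M) (f := mulDirectSystem M p) g hcompat (c • m)).trans ?_
    apply hsmul_inj (P i)
    show ((P i : ℤ)) • g i (c • m) = ((P i : ℤ)) • y
    have hms' : (s : ℤ) • y = f m := by
      simpa [Submonoid.smul_def] using hms
    rw [map_smul, smul_comm ((P i : ℤ)) c, hPg i, ← hms', smul_smul, mul_comm, ← hc]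
  exact ⟨(LinearEquiv.ofBijective φ ⟨hinj, hsurj⟩).toAddEquiv⟩
end

section
/- Let S be a nonempty set of prime numbers and let (p_i)_{i≥1} be a sequence of elements of S in which every element of S occurs infinitely often. Then the colimit of the direct system ℤ → ℤ → ℤ → ⋯, where the i-th connecting map is multiplication by p_i, is isomorphic as an abelian group to ℚ_S. -/
private theorem dlKey (S : Set ℕ) (p : ℕ → ℕ)
    (hall : ∀ q ∈ S, {i : ℕ | p i = q}.Infinite) :
    ∀ d : ℕ, d ≠ 0 → (∀ q : ℕ, q.Prime → q ∣ d → q ∈ S) →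
      ∃ i : ℕ, (d : ℤ) ∣ ∏ l ∈ Finset.range i, (p l : ℤ) := by
  have main : ∀ d : ℕ, d ≠ 0 → (∀ q : ℕ, q.Prime → q ∣ d → q ∈ S) →
      ∀ i₀ : ℕ, ∃ i : ℕ, i₀ ≤ i ∧ (d : ℤ) ∣ ∏ l ∈ Finset.Ico i₀ i, (p l : ℤ) := by
    intro d
    induction d using Nat.strong_induction_on with
    | _ d ih =>
      intro hd0 hdS i₀
      rcases eq_or_ne d 1 with rfl | hd1
      · exact ⟨i₀, le_rfl, by simp⟩
      · obtain ⟨q, hq, hqd⟩ := Nat.exists_prime_and_dvd hd1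
        have hqS : q ∈ S := hdS q hq hqd
        obtain ⟨j, hj, hji⟩ := ((hall q hqS).exists_gt i₀)
        obtain ⟨e, he⟩ := hqd
        have he0 : e ≠ 0 := by rintro rfl; simp at he; exact hd0 he
        have hlt : e < d := by
          rw [he]; exact lt_mul_left (Nat.pos_of_ne_zero he0) hq.one_lt
        obtain ⟨i, hi, hdvd⟩ := ih e hlt he0
          (fun r hr hre => hdS r hr (hre.trans ⟨q, by rw [he, mul_comm]⟩)) (j + 1)
        refine ⟨i, le_trans (le_of_lt hji) (le_trans (Nat.le_succ j) hi), ?_⟩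
        have h1 : Finset.Ico i₀ i = Finset.Ico i₀ j ∪ Finset.Ico j i := by
          rw [Finset.Ico_union_Ico_eq_Ico (le_of_lt hji) (le_trans (Nat.le_succ j) hi)]
        rw [h1, Finset.prod_union (Finset.Ico_disjoint_Ico_consecutive i₀ j i)]
        have h2 : (∏ l ∈ Finset.Ico j i, (p l : ℤ))
            = (p j : ℤ) * ∏ l ∈ Finset.Ico (j+1) i, (p l : ℤ) :=
          Finset.prod_eq_prod_Ico_succ_bot (lt_of_lt_of_le (Nat.lt_succ_self j) hi) _
        rw [h2, he]
        push_cast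
        rw [hj]
        exact Dvd.dvd.mul_left (mul_dvd_mul_left _ hdvd) _
  intro d hd0 hdS
  obtain ⟨i, _, hdvd⟩ := main d hd0 hdS 0
  exact ⟨i, by simpa using hdvd⟩

/-- Let `S` be a nonempty set of primes and `(p_i)` a sequence of
elements of `S` in which every element of `S` occurs infinitely often. Then the colimit
of the direct system `ℤ → ℤ → ℤ → ⋯`, with `i`-th connecting map multiplication by
`p_i`, is isomorphic as an abelian group to `ℚ_S`. -/
theorem directLimit_int_mul_addEquiv_ratSubgroup
    (S : Set ℕ) (hSne : S.Nonempty) (hS : ∀ p ∈ S, Nat.Prime p)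
    (p : ℕ → ℕ) (hp : ∀ i, p i ∈ S)
    (hall : ∀ q ∈ S, {i : ℕ | p i = q}.Infinite) :
    Nonempty
      ((Module.DirectLimit (fun _ : ℕ => ℤ) (mulDirectSystem ℤ p)) ≃+ ratSubgroup S) := by
  classical
  set P : ℕ → ℤ := fun i => ∏ l ∈ Finset.range i, (p l : ℤ) with hP
  have hPne : ∀ i, P i ≠ 0 := by
    intro i
    refine Finset.prod_ne_zero_iff.2 fun l _ => ?_
    exact_mod_cast (hS _ (hp l)).ne_zero
  set g : ∀ _ : ℕ, ℤ →ₗ[ℤ] ℚ :=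
    fun i => ((P i : ℚ))⁻¹ • (Int.castAddHom ℚ).toIntLinearMap with hg
  have hgapply : ∀ i x, g i x = (x : ℚ) / (P i : ℚ) := by
    intro i x
    simp [hg, div_eq_inv_mul]
  have Hg : ∀ (i j : ℕ) (hij : i ≤ j) (x : ℤ),
      g j (mulDirectSystem ℤ p i j hij x) = g i x := by
    intro i j hij x
    have hfx : mulDirectSystem ℤ p i j hij x = (∏ l ∈ Finset.Ico i j, (p l : ℤ)) * x := by
      simp [mulDirectSystem, smul_eq_mul]
    have hPij : P j = P i * ∏ l ∈ Finset.Ico i j, (p l : ℤ) := by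
      simp only [hP, Finset.range_eq_Ico]
      exact (Finset.prod_Ico_consecutive (fun l => (p l : ℤ)) (Nat.zero_le i) hij).symm
    rw [hgapply, hgapply, hfx, hPij]
    have h1 : (P i : ℚ) ≠ 0 := by exact_mod_cast hPne i
    have h2 : (∏ l ∈ Finset.Ico i j, ((p l : ℚ))) ≠ 0 :=
      Finset.prod_ne_zero_iff.2 fun l _ => by exact_mod_cast (hS _ (hp l)).ne_zero
    push_cast
    field_simp
  set F := Module.DirectLimit.lift ℤ ℕ (fun _ : ℕ => ℤ) (mulDirectSystem ℤ p) g Hg with hF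
  have hFof : ∀ i x, F (Module.DirectLimit.of ℤ ℕ (fun _ : ℕ => ℤ) (mulDirectSystem ℤ p) i x)
      = (x : ℚ) / (P i : ℚ) := by
    intro i x
    rw [hF, Module.DirectLimit.lift_of, hgapply]
  have hmem : ∀ z, F z ∈ ratSubgroup S := by
    intro z
    obtain ⟨i, x, rfl⟩ := Module.DirectLimit.exists_of z
    rw [hFof]
    intro q hq hden
    have h1 : (x : ℚ) / (P i : ℚ) = Rat.divInt x (P i) := by
      rw [Rat.divInt_eq_div]
    rw [h1] at hden
    have h2 : (q : ℤ) ∣ P i := by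
      have hd := Rat.den_dvd x (P i)
      exact (Int.natCast_dvd_natCast.mpr hden).trans hd
    have hqp : Prime (q : ℤ) := Nat.prime_iff_prime_int.mp hq
    obtain ⟨l, _, hl⟩ := hqp.exists_mem_finset_dvd h2
    have hql : q ∣ p l := Int.natCast_dvd_natCast.mp hl
    have heq : q = p l := ((Nat.prime_dvd_prime_iff_eq hq (hS _ (hp l))).mp hql)
    rw [heq]; exact hp l
  set F' : Module.DirectLimit (fun _ : ℕ => ℤ) (mulDirectSystem ℤ p) →+ ratSubgroup S :=
    AddMonoidHom.codRestrict F.toAddMonoidHom _ hmem with hF'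
  have hinj : Function.Injective F' := by
    intro a b hab
    have h0 : F (a - b) = 0 := by
      have h := congrArg Subtype.val hab
      simp only [hF', AddMonoidHom.codRestrict_apply] at h
      rw [map_sub]
      exact sub_eq_zero.mpr h
    obtain ⟨i, x, hx⟩ := Module.DirectLimit.exists_of (a - b)
    rw [← hx, hFof] at h0
    have h1 : (P i : ℚ) ≠ 0 := by exact_mod_cast hPne i
    have hx0 : x = 0 := by
      rw [div_eq_zero_iff] at h0
      rcases h0 with h0 | h0
      · exact_mod_cast h0
      · exact absurd h0 h1
    rw [hx0, map_zero] at hx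
    exact sub_eq_zero.mp hx.symm
  have hsurj : Function.Surjective F' := by
    rintro ⟨q, hq⟩
    obtain ⟨i, hdvd⟩ := dlKey S p hall q.den q.den_nz (fun r hr hrd => hq r hr hrd)
    obtain ⟨k, hk⟩ := hdvd
    refine ⟨Module.DirectLimit.of ℤ ℕ (fun _ : ℕ => ℤ) (mulDirectSystem ℤ p) i (q.num * k), ?_⟩
    apply Subtype.ext
    rw [hF']
    simp only [AddMonoidHom.codRestrict_apply, LinearMap.toAddMonoidHom_coe]
    change F (Module.DirectLimit.of ℤ ℕ (fun _ : ℕ => ℤ) (mulDirectSystem ℤ p) i (q.num * k)) = q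
    rw [hFof]
    have hk' : P i = (q.den : ℤ) * k := hk
    have hk0 : (k : ℚ) ≠ 0 := by
      intro h
      apply hPne i
      rw [hk', show k = 0 from by exact_mod_cast h, mul_zero]
    have hden : ((q.den : ℚ)) ≠ 0 := by exact_mod_cast q.den_nz
    rw [hk']
    push_cast
    rw [mul_div_mul_right _ _ hk0, Rat.num_div_den]
  exact ⟨AddEquiv.ofBijective F' ⟨hinj, hsurj⟩⟩
end
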